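/- Let m ≥ 1 be an integer and let φ₁, …, φ_m be an admissible family of real angles (φ_j − φ_k ∉ πℤ for all j ≠ k). Then the subspace {ξ ∈ V_m : ξ is m-liftably tangent to c_{φ_k} for every k ∈ {1, …, m}} of V_m has K-dimension exactly 2. (This is the kernel of the (k+1)-st reduced Kodaira–Spencer–Mather map of the multicusp c_{θ̂_j} obtained by removing one branch from a multicusp with m + 1 branches.) -/

import Mathlib

open Polynomial

/-- First component of the rotated cusp `c_θ(x) = R_θ (x², x³)` as a polynomial over `K`. -/
noncomputable def cusp1 (K : Type*) [RCLike K] (θ : ℝ) : Polynomial K :=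
  C ((Real.cos θ : K)) * X ^ 2 - C ((Real.sin θ : K)) * X ^ 3

/-- Second component of the rotated cusp. -/
noncomputable def cusp2 (K : Type*) [RCLike K] (θ : ℝ) : Polynomial K :=
  C ((Real.sin θ : K)) * X ^ 2 + C ((Real.cos θ : K)) * X ^ 3

/-- First component of the derivative `c_θ'(x)`. -/
noncomputable def dcusp1 (K : Type*) [RCLike K] (θ : ℝ) : Polynomial K :=
  C ((Real.cos θ : K)) * (2 * X) - C ((Real.sin θ : K)) * (3 * X ^ 2)

/-- Second component of the derivative `c_θ'(x)`. -/
noncomputable def dcusp2 (K : Type*) [RCLike K] (θ : ℝ) : Polynomial K :=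
  C ((Real.sin θ : K)) * (2 * X) + C ((Real.cos θ : K)) * (3 * X ^ 2)

/-- Composition `P(c_θ(x))` of a two-variable polynomial with the rotated cusp. -/
noncomputable def cuspEval (K : Type*) [RCLike K] (θ : ℝ) (P : MvPolynomial (Fin 2) K) :
    Polynomial K :=
  MvPolynomial.aeval ![cusp1 K θ, cusp2 K θ] P

/-- `ξ = (P, Q)` is `i`-liftably tangent to the rotated cusp `c_θ`:
there is `η ∈ K[x]` with `x^(2i+2)` dividing both `P(c_θ(x)) - η(x)·c_θ'(x)₁`
and `Q(c_θ(x)) - η(x)·c_θ'(x)₂`.  This characterizes the kernel of the `i`-th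
reduced Kodaira–Spencer–Mather map of the cusp `c_θ`. -/
def LiftTang (K : Type*) [RCLike K] (i : ℕ) (θ : ℝ)
    (ξ : MvPolynomial (Fin 2) K × MvPolynomial (Fin 2) K) : Prop :=
  ∃ η : Polynomial K,
    (X : Polynomial K) ^ (2 * i + 2) ∣ cuspEval K θ ξ.1 - η * dcusp1 K θ ∧
    (X : Polynomial K) ^ (2 * i + 2) ∣ cuspEval K θ ξ.2 - η * dcusp2 K θ

/-- `V_i`: pairs of homogeneous polynomials of degree `i` in `K[X, Y]`,
identified with the jet space `m₀^i θ₀(2)/m₀^(i+1) θ₀(2)`. -/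
noncomputable def Vsp (K : Type*) [RCLike K] (i : ℕ) :
    Submodule K (MvPolynomial (Fin 2) K × MvPolynomial (Fin 2) K) :=
  (MvPolynomial.homogeneousSubmodule (Fin 2) K i).prod
    (MvPolynomial.homogeneousSubmodule (Fin 2) K i)

/-- A family of angles is admissible if the difference of any two distinct members
is not an integer multiple of `π`. -/
def Admissible {n : ℕ} (θ : Fin n → ℝ) : Prop :=
  ∀ j k, j ≠ k → ∀ m : ℤ, θ j - θ k ≠ m * Real.pi

/-!
For a form `F` of degree `d`, `F(c_θ(x)) = x^(2d) F(R_θ(1, x))`, so whether `(P, Q) ∈ V_m` is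
`m`-liftably tangent to `c_θ` is decided by `P, Q` along the line `R_θ(1, x)` modulo `x²`.
The constant term of that condition says that the form `X Q - Y P` of degree `m + 1` vanishes
at the direction `θ`; for the `m` admissible directions `φ_k` this makes it
`g · (a X + b Y)` with `g = ∏ₖ (cos φₖ Y - sin φₖ X)`. The fields
`ζᵢ = 2 g eᵢ + 4 (∂ᵢ g) (X, Y)` are liftably tangent to every `c_{φₖ}`, and their `X Q - Y P`
are `-2 g Y` and `2 g X`.
Subtracting them leaves a radial field `(X h, Y h)`, and tangency of a radial field forces `h`,
of degree `m - 1`, to vanish at all `m` directions, so `h = 0`.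
-/

namespace MvPolynomial

section CommSemiring

variable {σ R : Type*} [CommSemiring R] {φ ψ : MvPolynomial σ R} {m n : ℕ}

theorem IsHomogeneous.aeval_smul {A : Type*} [CommSemiring A] [Algebra R A]
    (hφ : φ.IsHomogeneous n) (z : A) (v : σ → A) :
    MvPolynomial.aeval (z • v) φ = z ^ n * MvPolynomial.aeval v φ := by
  rw [φ.as_sum, map_sum, map_sum, Finset.mul_sum]
  refine Finset.sum_congr rfl fun u hu => ?_
  simp only [aeval_monomial, Finsupp.prod, Pi.smul_apply, smul_eq_mul, mul_pow,
    Finset.prod_mul_distrib, Finset.prod_pow_eq_pow_sum, ← hφ.degree_eq_sum_deg_support hu]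
  ring

theorem homogeneousComponent_mul_of_isHomogeneous (hφ : φ.IsHomogeneous m) (n : ℕ) :
    homogeneousComponent (m + n) (φ * ψ) = φ * homogeneousComponent n ψ := by
  conv_lhs => rw [← sum_homogeneousComponent ψ, Finset.mul_sum, map_sum]
  have hterm (i : ℕ) : homogeneousComponent (m + n) (φ * homogeneousComponent i ψ) =
      if i = n then φ * homogeneousComponent n ψ else 0 := by
    rw [homogeneousComponent_of_mem (hφ.mul (homogeneousComponent_isHomogeneous i ψ))]
    split_ifs <;> first | subst_vars; rfl | omega
  simp only [hterm, Finset.sum_ite_eq', Finset.mem_range]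
  split_ifs with hn
  · rfl
  · rw [homogeneousComponent_eq_zero _ _ (by omega), mul_zero]

end CommSemiring

section IsDomain

variable {σ R : Type*} [CommRing R] [IsDomain R] {φ ψ : MvPolynomial σ R} {m n : ℕ}

theorem IsHomogeneous.of_mul_left (hφ : φ.IsHomogeneous m) (hφ0 : φ ≠ 0)
    (h : (φ * ψ).IsHomogeneous n) : ψ.IsHomogeneous (n - m) := by
  intro d hd
  have hcomp : homogeneousComponent d.degree ψ ≠ 0 := fun h0 => hd <| by
    simpa [coeff_homogeneousComponent] using congrArg (coeff d) h0
  rw [← mul_ne_zero_iff_left hφ0, ← homogeneousComponent_mul_of_isHomogeneous hφ,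
    homogeneousComponent_of_mem h] at hcomp
  split_ifs at hcomp with hdeg
  · simpa [Finsupp.degree_eq_weight_one, Pi.one_def] using (by omega : d.degree = n - m)
  · exact absurd rfl hcomp

theorem IsHomogeneous.eq_zero_of_dvd_of_lt (hφ : φ.IsHomogeneous m) (hψ : ψ.IsHomogeneous n)
    (hdvd : φ ∣ ψ) (hlt : n < m) : ψ = 0 := by
  by_contra hψ0
  obtain ⟨τ, rfl⟩ := hdvd
  have hτ : τ ≠ 0 := right_ne_zero_of_mul hψ0
  have hφ0 : φ ≠ 0 := left_ne_zero_of_mul hψ0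
  have := hψ.totalDegree hψ0
  rw [totalDegree_mul_of_isDomain hφ0 hτ, hφ.totalDegree hφ0] at this
  omega

end IsDomain

theorem dvd_aeval_sub_aeval {σ R A : Type*} [CommRing R] [CommRing A] [Algebra R A]
    {a : A} {v w : σ → A} (h : ∀ i, a ∣ v i - w i) (φ : MvPolynomial σ R) :
    a ∣ aeval v φ - aeval w φ := by
  let π := Ideal.Quotient.mkₐ R (Ideal.span {a})
  have hvw : (fun i => π (v i)) = fun i => π (w i) := by
    funext i
    exact Ideal.Quotient.eq.mpr (Ideal.mem_span_singleton.mpr (h i))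
  rw [← Ideal.mem_span_singleton, ← Ideal.Quotient.eq, ← Ideal.Quotient.mkₐ_eq_mk R,
    comp_aeval_apply, comp_aeval_apply, hvw]

variable {R : Type*} [CommRing R]

theorem IsHomogeneous.dvd_of_eval_eq_zero {φ : MvPolynomial (Fin 2) R} {n : ℕ}
    (hφ : φ.IsHomogeneous n) {c s : R} (hcs : c ^ 2 + s ^ 2 = 1) (h0 : eval ![c, s] φ = 0) :
    C c * X 1 - C s * X 0 ∣ φ := by
  -- modulo `L = c Y - s X`, the coordinates `X, Y` become `c M, s M` with `M = c X + s Y`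
  set L : MvPolynomial (Fin 2) R := C c * X 1 - C s * X 0
  set M : MvPolynomial (Fin 2) R := C c * X 0 + C s * X 1
  have hC : C c ^ 2 + C s ^ 2 = (1 : MvPolynomial (Fin 2) R) := by
    rw [← map_pow, ← map_pow, ← map_add, hcs, map_one]
  have hcoord : ∀ i, L ∣ X i - (M • fun j => C (![c, s] j)) i := by
    intro i
    fin_cases i
    · refine ⟨-C s, ?_⟩
      simp only [Fin.zero_eta, Pi.smul_apply, Matrix.cons_val_zero, smul_eq_mul, L, M]
      linear_combination -X 0 * hC
    · refine ⟨C c, ?_⟩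
      simp only [Fin.mk_one, Pi.smul_apply, Matrix.cons_val_one, Matrix.cons_val_fin_one,
        smul_eq_mul, L, M]
      linear_combination -X 1 * hC
  have := dvd_aeval_sub_aeval hcoord φ
  have hev : MvPolynomial.aeval (fun j => C (![c, s] j)) φ = C (eval ![c, s] φ) :=
    (comp_aeval_apply ![c, s] (Algebra.ofId R (MvPolynomial (Fin 2) R)) φ).symm
  rwa [aeval_X_left_apply, hφ.aeval_smul, hev, h0, map_zero, mul_zero, sub_zero] at this

theorem exists_eq_X_mul_of_X_mul_eq [IsDomain R] {φ ψ : MvPolynomial (Fin 2) R}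
    (h : X 0 * ψ = X 1 * φ) : ∃ ρ, φ = X 0 * ρ ∧ ψ = X 1 * ρ := by
  obtain ⟨ρ, rfl⟩ : X 0 ∣ φ :=
    ((X_prime.dvd_mul).mp (h ▸ dvd_mul_right _ _)).resolve_left (by simp)
  refine ⟨ρ, rfl, mul_left_cancel₀ (X_ne_zero 0) ?_⟩
  rw [h]; ring

end MvPolynomial

namespace RotatedCusp

open MvPolynomial (IsHomogeneous pderiv eval)

variable {K : Type*} [RCLike K]

variable (K) in
noncomputable def dir (θ : ℝ) : Fin 2 → K := ![(Real.cos θ : K), (Real.sin θ : K)]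

variable (K) in
noncomputable def normal (θ : ℝ) : Fin 2 → K := ![-(Real.sin θ : K), (Real.cos θ : K)]

theorem cos_sq_add_sin_sq (θ : ℝ) : (Real.cos θ : K) ^ 2 + (Real.sin θ : K) ^ 2 = 1 := by
  exact_mod_cast Real.cos_sq_add_sin_sq θ

theorem dir_mul_dir_add_normal_mul_normal (θ : ℝ) (i j : Fin 2) :
    dir K θ i * dir K θ j + normal K θ i * normal K θ j = if i = j then 1 else 0 := by
  have := cos_sq_add_sin_sq (K := K) θ
  fin_cases i <;> fin_cases j <;>
    simp only [dir, normal, Fin.isValue, Fin.zero_eta, Fin.mk_one, Matrix.cons_val_zero,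
      Matrix.cons_val_one, Matrix.cons_val_fin_one, mul_neg, neg_mul, neg_neg, zero_ne_one,
      one_ne_zero, ↓reduceIte] <;>
    first | linear_combination this | ring

variable (K) in
/-- `F ↦ F(R_θ (1, x))`. -/
noncomputable def lineEval (θ : ℝ) : MvPolynomial (Fin 2) K →ₐ[K] K[X] :=
  MvPolynomial.aeval fun j => C (dir K θ j) + C (normal K θ j) * X

theorem lineEval_X (θ : ℝ) (j : Fin 2) :
    lineEval K θ (MvPolynomial.X j) = C (dir K θ j) + C (normal K θ j) * X :=
  MvPolynomial.aeval_X _ _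

theorem cuspEval_eq_of_isHomogeneous (θ : ℝ) {F : MvPolynomial (Fin 2) K} {d : ℕ}
    (hF : F.IsHomogeneous d) : cuspEval K θ F = X ^ (2 * d) * lineEval K θ F := by
  have hcusp : ![cusp1 K θ, cusp2 K θ] =
      (X ^ 2 : K[X]) • fun j => C (dir K θ j) + C (normal K θ j) * X := by
    funext j
    fin_cases j <;>
      simp only [cusp1, cusp2, dir, normal, Fin.isValue, Fin.zero_eta, Fin.mk_one,
        Matrix.cons_val_zero, Matrix.cons_val_one, Matrix.cons_val_fin_one, Pi.smul_apply,
        smul_eq_mul, map_neg] <;>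
      ring
  rw [cuspEval, hcusp, hF.aeval_smul, ← pow_mul]
  rfl

theorem eval_zero_lineEval (θ : ℝ) (F : MvPolynomial (Fin 2) K) :
    (lineEval K θ F).eval 0 = eval (dir K θ) F := by
  have hdir : (fun j => Polynomial.aeval (0 : K) (C (dir K θ j) + C (normal K θ j) * X)) =
      dir K θ := by
    funext j
    simp
  rw [← Polynomial.coe_aeval_eq_eval, lineEval, MvPolynomial.comp_aeval_apply, hdir]
  rfl

variable (K) in
noncomputable def velocity (θ : ℝ) (j : Fin 2) : K[X] :=
  2 * C (dir K θ j) + 3 * C (normal K θ j) * X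

theorem dcusp1_eq (θ : ℝ) : dcusp1 K θ = X * velocity K θ 0 := by
  simp only [dcusp1, velocity, dir, normal, Fin.isValue, Matrix.cons_val_zero, map_neg]
  ring

theorem dcusp2_eq (θ : ℝ) : dcusp2 K θ = X * velocity K θ 1 := by
  simp only [dcusp2, velocity, dir, normal, Fin.isValue, Matrix.cons_val_one,
    Matrix.cons_val_fin_one]
  ring

theorem liftTang_of_sq_dvd {θ : ℝ} {n : ℕ} {P Q : MvPolynomial (Fin 2) K}
    (hP : P.IsHomogeneous (n + 1)) (hQ : Q.IsHomogeneous (n + 1)) (η : K[X])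
    (h₁ : X ^ 2 ∣ lineEval K θ P - η * velocity K θ 0)
    (h₂ : X ^ 2 ∣ lineEval K θ Q - η * velocity K θ 1) :
    LiftTang K (n + 1) θ (P, Q) := by
  refine ⟨X ^ (2 * n + 1) * η, ?_, ?_⟩
  · rw [pow_add, cuspEval_eq_of_isHomogeneous θ hP, dcusp1_eq]
    convert mul_dvd_mul_left (X ^ (2 * (n + 1))) h₁ using 1
    ring
  · rw [pow_add, cuspEval_eq_of_isHomogeneous θ hQ, dcusp2_eq]
    convert mul_dvd_mul_left (X ^ (2 * (n + 1))) h₂ using 1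
    ring

theorem sq_dvd_of_liftTang {θ : ℝ} {d : ℕ} {P Q : MvPolynomial (Fin 2) K}
    (hP : P.IsHomogeneous d) (hQ : Q.IsHomogeneous d) (h : LiftTang K d θ (P, Q)) :
    X ^ 2 ∣ lineEval K θ P * velocity K θ 1 - lineEval K θ Q * velocity K θ 0 := by
  obtain ⟨η, h₁, h₂⟩ := h
  have := dvd_sub (h₁.mul_right (velocity K θ 1)) (h₂.mul_right (velocity K θ 0))
  rw [cuspEval_eq_of_isHomogeneous θ hP, cuspEval_eq_of_isHomogeneous θ hQ, dcusp1_eq,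
    dcusp2_eq, pow_add] at this
  refine (mul_dvd_mul_iff_left (pow_ne_zero (2 * d) X_ne_zero)).mp ?_
  convert this using 1
  ring

variable (K) in
noncomputable def wedge :
    (MvPolynomial (Fin 2) K × MvPolynomial (Fin 2) K) →ₗ[K] MvPolynomial (Fin 2) K where
  toFun ξ := MvPolynomial.X 0 * ξ.2 - MvPolynomial.X 1 * ξ.1
  map_add' ξ ζ := by simp only [Prod.fst_add, Prod.snd_add]; ring
  map_smul' a ξ := by
    simp only [Prod.smul_fst, Prod.smul_snd, mul_smul_comm, smul_sub, RingHom.id_apply]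

theorem wedge_apply (ξ : MvPolynomial (Fin 2) K × MvPolynomial (Fin 2) K) :
    wedge K ξ = MvPolynomial.X 0 * ξ.2 - MvPolynomial.X 1 * ξ.1 :=
  rfl

theorem eval_dir_wedge_of_liftTang {θ : ℝ} {d : ℕ} {P Q : MvPolynomial (Fin 2) K}
    (hP : P.IsHomogeneous d) (hQ : Q.IsHomogeneous d) (h : LiftTang K d θ (P, Q)) :
    eval (dir K θ) (wedge K (P, Q)) = 0 := by
  have h0 := X_dvd_iff.mp (dvd_trans (dvd_pow_self X two_ne_zero) (sq_dvd_of_liftTang hP hQ h))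
  simp only [coeff_zero_eq_eval_zero, eval_sub, eval_mul, eval_zero_lineEval, velocity, eval_add,
    eval_C, eval_X, eval_ofNat, mul_zero, add_zero] at h0
  simp only [wedge_apply, map_sub, map_mul, MvPolynomial.eval_X]
  simp only [dir, Matrix.cons_val_zero, Matrix.cons_val_one] at h0 ⊢
  linear_combination -h0 / 2

theorem eval_dir_eq_zero_of_liftTang_radial {θ : ℝ} {d : ℕ} {h : MvPolynomial (Fin 2) K}
    (hh : h.IsHomogeneous d)
    (htang : LiftTang K (d + 1) θ (MvPolynomial.X 0 * h, MvPolynomial.X 1 * h)) :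
    eval (dir K θ) h = 0 := by
  have hX (i : Fin 2) : (MvPolynomial.X i * h).IsHomogeneous (d + 1) :=
    add_comm d 1 ▸ (MvPolynomial.isHomogeneous_X K i).mul hh
  have hsq := sq_dvd_of_liftTang (hX 0) (hX 1) htang
  have hrot : lineEval K θ (MvPolynomial.X 0 * h) * velocity K θ 1 -
      lineEval K θ (MvPolynomial.X 1 * h) * velocity K θ 0 = X * lineEval K θ h := by
    have := congrArg C (cos_sq_add_sin_sq (K := K) θ)
    simp only [map_mul, lineEval_X, velocity, dir, normal, map_add, map_pow, map_one, map_neg,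
      Matrix.cons_val_zero, Matrix.cons_val_one] at this ⊢
    linear_combination X * lineEval K θ h * this
  rw [hrot, pow_two] at hsq
  rw [← eval_zero_lineEval, ← coeff_zero_eq_eval_zero, ← X_dvd_iff]
  exact (mul_dvd_mul_iff_left X_ne_zero).mp hsq

variable (K) in
noncomputable def linForm (θ : ℝ) : MvPolynomial (Fin 2) K :=
  MvPolynomial.C (Real.cos θ : K) * MvPolynomial.X 1 -
    MvPolynomial.C (Real.sin θ : K) * MvPolynomial.X 0

theorem isHomogeneous_linForm (θ : ℝ) : (linForm K θ).IsHomogeneous 1 :=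
  (MvPolynomial.isHomogeneous_C_mul_X _ _).sub (MvPolynomial.isHomogeneous_C_mul_X _ _)

theorem lineEval_linForm (θ : ℝ) : lineEval K θ (linForm K θ) = X := by
  have := congrArg C (cos_sq_add_sin_sq (K := K) θ)
  simp only [linForm, map_sub, map_mul, MvPolynomial.algHom_C, lineEval_X, dir, normal,
    Polynomial.algebraMap_eq, map_add, map_pow, map_one, map_neg, Matrix.cons_val_zero,
    Matrix.cons_val_one] at this ⊢
  linear_combination X * this

theorem linForm_ne_zero (θ : ℝ) : linForm K θ ≠ 0 := fun h =>
  X_ne_zero (by rw [← lineEval_linForm (K := K) θ, h, map_zero])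

theorem pderiv_linForm (θ : ℝ) (i : Fin 2) :
    pderiv i (linForm K θ) = MvPolynomial.C (normal K θ i) := by
  fin_cases i <;> simp [linForm, normal, MvPolynomial.pderiv_X]

theorem eval_dir_linForm (ψ θ : ℝ) :
    eval (dir K ψ) (linForm K θ) = (Real.sin (ψ - θ) : K) := by
  simp only [linForm, dir, map_sub, map_mul, MvPolynomial.eval_C, MvPolynomial.eval_X,
    Fin.isValue, Matrix.cons_val_zero, Matrix.cons_val_one, Matrix.cons_val_fin_one, Real.sin_sub]
  ring

theorem linForm_dvd {θ : ℝ} {F : MvPolynomial (Fin 2) K} {d : ℕ} (hF : F.IsHomogeneous d)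
    (h0 : eval (dir K θ) F = 0) : linForm K θ ∣ F :=
  hF.dvd_of_eval_eq_zero (cos_sq_add_sin_sq θ) h0

theorem isHomogeneous_prod_linForm {ι : Type*} (φ : ι → ℝ) (t : Finset ι) :
    (∏ k ∈ t, linForm K (φ k)).IsHomogeneous t.card := by
  simpa using IsHomogeneous.prod t _ (fun _ => 1) fun k _ => isHomogeneous_linForm (φ k)

theorem isHomogeneous_prod_univ_linForm {n : ℕ} (φ : Fin n → ℝ) :
    (∏ k, linForm K (φ k)).IsHomogeneous n := by
  simpa using isHomogeneous_prod_linForm (K := K) φ Finset.univ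

theorem prod_linForm_ne_zero {ι : Type*} (φ : ι → ℝ) (t : Finset ι) :
    ∏ k ∈ t, linForm K (φ k) ≠ 0 :=
  Finset.prod_ne_zero_iff.mpr fun k _ => linForm_ne_zero (φ k)

theorem prod_linForm_dvd {n : ℕ} {φ : Fin n → ℝ} (hφ : Admissible φ)
    {F : MvPolynomial (Fin 2) K} {d : ℕ} (hF : F.IsHomogeneous d)
    (hev : ∀ k, eval (dir K (φ k)) F = 0) :
    ∏ k, linForm K (φ k) ∣ F := by
  suffices ∀ t : Finset (Fin n), ∏ k ∈ t, linForm K (φ k) ∣ F from this Finset.univ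
  intro t
  induction t using Finset.induction_on with
  | empty => simp
  | insert a t ha ih =>
    obtain ⟨G, rfl⟩ := ih
    have hG := (isHomogeneous_prod_linForm φ t).of_mul_left (prod_linForm_ne_zero φ t) hF
    have hprod : eval (dir K (φ a)) (∏ k ∈ t, linForm K (φ k)) ≠ 0 := by
      rw [map_prod]
      refine Finset.prod_ne_zero_iff.mpr fun k hk => ?_
      rw [eval_dir_linForm, RCLike.ofReal_ne_zero, Ne, Real.sin_eq_zero_iff]
      rintro ⟨m, hm⟩
      exact hφ a k (by rintro rfl; exact ha hk) m hm.symm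
    have hGa : eval (dir K (φ a)) G = 0 := by
      have := hev a
      rw [map_mul] at this
      exact (mul_eq_zero.mp this).resolve_left hprod
    rw [Finset.prod_insert ha, mul_comm]
    exact mul_dvd_mul_left _ (linForm_dvd hG hGa)

noncomputable def zetaCoord (g : MvPolynomial (Fin 2) K) (i j : Fin 2) : MvPolynomial (Fin 2) K :=
  (if i = j then 2 * g else 0) + 4 * MvPolynomial.X j * pderiv i g

noncomputable def zeta (g : MvPolynomial (Fin 2) K) (i : Fin 2) :
    MvPolynomial (Fin 2) K × MvPolynomial (Fin 2) K :=
  (zetaCoord g i 0, zetaCoord g i 1)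

theorem isHomogeneous_zetaCoord {g : MvPolynomial (Fin 2) K} {n : ℕ}
    (hg : g.IsHomogeneous (n + 1)) (i j : Fin 2) : (zetaCoord g i j).IsHomogeneous (n + 1) := by
  have hδ : (if i = j then 2 * g else 0).IsHomogeneous (n + 1) := by
    split_ifs
    · exact two_mul g ▸ hg.add hg
    · exact MvPolynomial.isHomogeneous_zero _ _ _
  have hX : (MvPolynomial.X j * pderiv i g).IsHomogeneous (n + 1) := by
    simpa [add_comm] using (MvPolynomial.isHomogeneous_X K j).mul hg.pderiv
  simpa only [zetaCoord, mul_assoc, map_ofNat] using hδ.add (hX.C_mul 4)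

theorem zeta_mem_Vsp {g : MvPolynomial (Fin 2) K} {n : ℕ} (hg : g.IsHomogeneous (n + 1))
    (i : Fin 2) : zeta g i ∈ Vsp K (n + 1) :=
  ⟨isHomogeneous_zetaCoord hg i 0, isHomogeneous_zetaCoord hg i 1⟩

theorem wedge_zeta_zero (g : MvPolynomial (Fin 2) K) :
    wedge K (zeta g 0) = -(2 * g * MvPolynomial.X 1) := by
  simp only [wedge_apply, zeta, zetaCoord, Fin.isValue, ↓reduceIte, zero_ne_one, zero_add]
  ring

theorem wedge_zeta_one (g : MvPolynomial (Fin 2) K) :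
    wedge K (zeta g 1) = 2 * g * MvPolynomial.X 0 := by
  simp only [wedge_apply, zeta, zetaCoord, Fin.isValue, ↓reduceIte, one_ne_zero, zero_add]
  ring

theorem lineEval_pderiv_linForm_mul (θ : ℝ) (h : MvPolynomial (Fin 2) K) (i : Fin 2) :
    lineEval K θ (pderiv i (linForm K θ * h)) =
      C (normal K θ i) * lineEval K θ h + X * lineEval K θ (pderiv i h) := by
  rw [Derivation.leibniz, pderiv_linForm, smul_eq_mul, smul_eq_mul, map_add, map_mul, map_mul,
    lineEval_linForm, MvPolynomial.algHom_C, Polynomial.algebraMap_eq]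
  ring

theorem sq_dvd_lineEval_zetaCoord_sub (θ : ℝ) (h : MvPolynomial (Fin 2) K) (i j : Fin 2) :
    X ^ 2 ∣ lineEval K θ (zetaCoord (linForm K θ * h) i j) -
      (2 * C (normal K θ i) * lineEval K θ h +
        X * (2 * lineEval K θ (pderiv i h) + C (dir K θ i) * lineEval K θ h)) *
        velocity K θ j := by
  -- the constant terms cancel, and the linear terms cancel because
  -- `(dir θ, normal θ)` is an orthonormal frame
  have horth := congrArg C (dir_mul_dir_add_normal_mul_normal (K := K) θ i j)
  refine ⟨-(2 * C (normal K θ j) * lineEval K θ (pderiv i h) +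
    3 * C (dir K θ i) * C (normal K θ j) * lineEval K θ h), ?_⟩
  simp only [zetaCoord, map_add, map_mul, apply_ite (lineEval K θ), map_zero, map_ofNat,
    lineEval_X, lineEval_linForm, lineEval_pderiv_linForm_mul, velocity] at horth ⊢
  split_ifs at horth ⊢ <;> simp only [map_one, map_zero] at horth <;>
    linear_combination (-2 * X * lineEval K θ h) * horth

theorem liftTang_zeta (θ : ℝ) {h : MvPolynomial (Fin 2) K} {n : ℕ} (hh : h.IsHomogeneous n)
    (i : Fin 2) : LiftTang K (n + 1) θ (zeta (linForm K θ * h) i) := by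
  have hg : (linForm K θ * h).IsHomogeneous (n + 1) :=
    add_comm 1 n ▸ (isHomogeneous_linForm θ).mul hh
  exact liftTang_of_sq_dvd (isHomogeneous_zetaCoord hg i 0) (isHomogeneous_zetaCoord hg i 1) _
    (sq_dvd_lineEval_zetaCoord_sub θ h i 0) (sq_dvd_lineEval_zetaCoord_sub θ h i 1)

variable (K) in
noncomputable def liftTangSubmodule (i : ℕ) (θ : ℝ) :
    Submodule K (MvPolynomial (Fin 2) K × MvPolynomial (Fin 2) K) where
  carrier := {ξ | LiftTang K i θ ξ}
  zero_mem' := ⟨0, by simp [cuspEval]⟩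
  add_mem' := by
    rintro ξ ζ ⟨η, h₁, h₂⟩ ⟨η', h₁', h₂'⟩
    refine ⟨η + η', ?_, ?_⟩
    · convert dvd_add h₁ h₁' using 1
      simp only [cuspEval, Prod.fst_add, map_add]
      ring
    · convert dvd_add h₂ h₂' using 1
      simp only [cuspEval, Prod.snd_add, map_add]
      ring
  smul_mem' := by
    rintro a ξ ⟨η, h₁, h₂⟩
    refine ⟨C a * η, ?_, ?_⟩
    · convert h₁.mul_left (C a) using 1
      simp only [cuspEval, Prod.smul_fst, map_smul, smul_eq_C_mul]
      ring
    · convert h₂.mul_left (C a) using 1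
      simp only [cuspEval, Prod.smul_snd, map_smul, smul_eq_C_mul]
      ring

variable (K) in
noncomputable def tangentKernel {n : ℕ} (m : ℕ) (φ : Fin n → ℝ) :
    Submodule K (MvPolynomial (Fin 2) K × MvPolynomial (Fin 2) K) :=
  Vsp K m ⊓ ⨅ k, liftTangSubmodule K m (φ k)

theorem mem_tangentKernel {n m : ℕ} {φ : Fin n → ℝ}
    {ξ : MvPolynomial (Fin 2) K × MvPolynomial (Fin 2) K} :
    ξ ∈ tangentKernel K m φ ↔ ξ ∈ Vsp K m ∧ ∀ k, LiftTang K m (φ k) ξ := by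
  simp only [tangentKernel, Submodule.mem_inf, Submodule.mem_iInf]
  rfl

theorem zeta_mem_tangentKernel {n : ℕ} (φ : Fin (n + 1) → ℝ) (i : Fin 2) :
    zeta (∏ k, linForm K (φ k)) i ∈ tangentKernel K (n + 1) φ := by
  refine mem_tangentKernel.mpr ⟨zeta_mem_Vsp (isHomogeneous_prod_univ_linForm φ) i,
    fun k => ?_⟩
  rw [← Finset.mul_prod_erase _ _ (Finset.mem_univ k)]
  exact liftTang_zeta (φ k)
    (by simpa using isHomogeneous_prod_linForm (K := K) φ (Finset.univ.erase k)) i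

section Kernel

variable {n : ℕ} {φ : Fin (n + 1) → ℝ}
  {ξ : MvPolynomial (Fin 2) K × MvPolynomial (Fin 2) K}

theorem exists_wedge_eq_prod_linForm_mul (hφ : Admissible φ)
    (hξ : ξ ∈ tangentKernel K (n + 1) φ) :
    ∃ a b : K, wedge K ξ =
      (∏ k, linForm K (φ k)) * (a • MvPolynomial.X 0 + b • MvPolynomial.X 1) := by
  obtain ⟨⟨hP, hQ⟩, htang⟩ := mem_tangentKernel.mp hξ
  have hW : (wedge K ξ).IsHomogeneous (1 + (n + 1)) :=
    ((MvPolynomial.isHomogeneous_X K 0).mul hQ).sub ((MvPolynomial.isHomogeneous_X K 1).mul hP)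
  obtain ⟨l, hl⟩ := prod_linForm_dvd hφ hW fun k => eval_dir_wedge_of_liftTang hP hQ (htang k)
  have hl1 : l ∈ MvPolynomial.homogeneousSubmodule (Fin 2) K 1 := by
    have := (isHomogeneous_prod_univ_linForm φ).of_mul_left (prod_linForm_ne_zero φ _) (hl ▸ hW)
    rwa [Nat.add_sub_cancel] at this
  rw [MvPolynomial.homogeneousSubmodule_one_eq_span_X,
    Submodule.mem_span_range_iff_exists_fun] at hl1
  obtain ⟨c, hc⟩ := hl1
  exact ⟨c 0, c 1, by rw [hl, ← hc, Fin.sum_univ_two]⟩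

theorem eq_zero_of_wedge_eq_zero (hφ : Admissible φ) (hξ : ξ ∈ tangentKernel K (n + 1) φ)
    (hw : wedge K ξ = 0) : ξ = 0 := by
  obtain ⟨⟨hP, -⟩, htang⟩ := mem_tangentKernel.mp hξ
  obtain ⟨h, hP', hQ'⟩ := MvPolynomial.exists_eq_X_mul_of_X_mul_eq (sub_eq_zero.mp hw)
  have hh : h.IsHomogeneous n := by
    have := (MvPolynomial.isHomogeneous_X K 0).of_mul_left (MvPolynomial.X_ne_zero 0) (hP' ▸ hP)
    rwa [Nat.add_sub_cancel] at this
  have hξ' : ξ = (MvPolynomial.X 0 * h, MvPolynomial.X 1 * h) := Prod.ext hP' hQ'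
  have hdvd := prod_linForm_dvd hφ hh fun k =>
    eval_dir_eq_zero_of_liftTang_radial hh (hξ' ▸ htang k)
  have h0 := (isHomogeneous_prod_univ_linForm φ).eq_zero_of_dvd_of_lt hh hdvd (Nat.lt_succ_self n)
  simp [hξ', h0]

theorem exists_eq_smul_zeta_add_smul_zeta (hφ : Admissible φ)
    (hξ : ξ ∈ tangentKernel K (n + 1) φ) :
    ∃ a b : K,
      ξ = a • zeta (∏ k, linForm K (φ k)) 0 + b • zeta (∏ k, linForm K (φ k)) 1 := by
  set g := ∏ k, linForm K (φ k)
  obtain ⟨a, b, hab⟩ := exists_wedge_eq_prod_linForm_mul hφ hξ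
  have hζ := zeta_mem_tangentKernel (K := K) φ
  have hmem : (2 : K) • ξ + b • zeta g 0 - a • zeta g 1 ∈ tangentKernel K (n + 1) φ :=
    sub_mem (add_mem (Submodule.smul_mem _ _ hξ) (Submodule.smul_mem _ _ (hζ 0)))
      (Submodule.smul_mem _ _ (hζ 1))
  have hw : wedge K ((2 : K) • ξ + b • zeta g 0 - a • zeta g 1) = 0 := by
    simp only [map_sub, map_add, map_smul, hab, wedge_zeta_zero, wedge_zeta_one,
      MvPolynomial.smul_eq_C_mul, map_ofNat]
    ring
  have h0 := eq_zero_of_wedge_eq_zero hφ hmem hw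
  exact ⟨-b / 2, a / 2, by linear_combination (norm := module) (2⁻¹ : K) • h0⟩

end Kernel

theorem linearIndependent_zeta {g : MvPolynomial (Fin 2) K} (hg : g ≠ 0) :
    LinearIndependent K ![zeta g 0, zeta g 1] := by
  rw [LinearIndependent.pair_iff]
  intro a b hab
  have hw := congrArg (wedge K) hab
  simp only [map_add, map_smul, wedge_zeta_zero, wedge_zeta_one, map_zero,
    MvPolynomial.smul_eq_C_mul] at hw
  have hlin : MvPolynomial.C b * MvPolynomial.X 0 - MvPolynomial.C a * MvPolynomial.X 1 =
      (0 : MvPolynomial (Fin 2) K) :=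
    (mul_eq_zero.mp (by linear_combination hw :
      2 * g * (MvPolynomial.C b * MvPolynomial.X 0 - MvPolynomial.C a * MvPolynomial.X 1) = 0)
      ).resolve_left (mul_ne_zero two_ne_zero hg)
  have ha := congrArg (MvPolynomial.eval ![0, 1]) hlin
  have hb := congrArg (MvPolynomial.eval ![1, 0]) hlin
  simp at ha hb
  exact ⟨ha, hb⟩

end RotatedCusp

open RotatedCusp

/-- Lemma 1 of the paper: for an admissible family `φ₁, …, φ_m` (`m ≥ 1`), the subspace
of `V_m` of elements that are `m`-liftably tangent to every `c_{φ_k}` has `K`-dimension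
exactly `2`: it contains two linearly independent elements that span it. -/
theorem kernel_of_removed_branch_KSM_dim_two (K : Type*) [RCLike K] (m : ℕ) (hm : 1 ≤ m)
    (φ : Fin m → ℝ) (hφ : Admissible φ) :
    ∃ ξ₁ ξ₂ : MvPolynomial (Fin 2) K × MvPolynomial (Fin 2) K,
      (ξ₁ ∈ Vsp K m ∧ ∀ k, LiftTang K m (φ k) ξ₁) ∧
      (ξ₂ ∈ Vsp K m ∧ ∀ k, LiftTang K m (φ k) ξ₂) ∧
      LinearIndependent K ![ξ₁, ξ₂] ∧
      ∀ ξ : MvPolynomial (Fin 2) K × MvPolynomial (Fin 2) K,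
        ξ ∈ Vsp K m → (∀ k, LiftTang K m (φ k) ξ) →
        ∃ a b : K, ξ = a • ξ₁ + b • ξ₂ := by
  obtain ⟨n, rfl⟩ : ∃ n, m = n + 1 := ⟨m - 1, by omega⟩
  have hζ (i : Fin 2) := mem_tangentKernel.mp (zeta_mem_tangentKernel (K := K) φ i)
  exact ⟨_, _, hζ 0, hζ 1, linearIndependent_zeta (prod_linForm_ne_zero φ _),
    fun ξ hV ht => exists_eq_smul_zeta_add_smul_zeta hφ (mem_tangentKernel.mpr ⟨hV, ht⟩)⟩
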